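/- If A ∈ {0,1}^{m×n} is monotone with row sums r = (r_1,...,r_m) and column sums c = (c_1,...,c_n), then r is majorized by the conjugate s of c (the 'only if' direction of the Gale–Ryser theorem). -/
import Mathlib


/-- Row sums of a matrix. -/
def rowSum {m n : ℕ} (A : Matrix (Fin m) (Fin n) ℕ) (i : Fin m) : ℕ := ∑ j, A i j

/-- Column sums of a matrix. -/
def colSum {m n : ℕ} (A : Matrix (Fin m) (Fin n) ℕ) (j : Fin n) : ℕ := ∑ i, A i j

/-- A (0,1)-matrix. -/
def ZeroOne {m n : ℕ} (A : Matrix (Fin m) (Fin n) ℕ) : Prop := ∀ i j, A i j ≤ 1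

/-- A matrix is monotone if its row sums and column sums are nonincreasing. -/
def MonotoneMat {m n : ℕ} (A : Matrix (Fin m) (Fin n) ℕ) : Prop :=
  Antitone (rowSum A) ∧ Antitone (colSum A)

/-- The conjugate of the tuple `c`, with respect to bound `m`:
`s i = |{j : c j ≥ i}|` where `i` is read 1-indexed (so `i : Fin m` stands for `i+1`). -/
def conjTuple (m : ℕ) {n : ℕ} (c : Fin n → ℕ) (i : Fin m) : ℕ :=
  (Finset.univ.filter (fun j => (i : ℕ) + 1 ≤ c j)).card

/-- `r` is majorized by `s`: partial sums of `r` are dominated by those of `s`,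
with equal total sums. -/
def MajorizedBy {m : ℕ} (r s : Fin m → ℕ) : Prop :=
  (∀ h : Fin m, ∑ i ∈ Finset.Iic h, r i ≤ ∑ i ∈ Finset.Iic h, s i) ∧
  (∑ i, r i = ∑ i, s i)

/-- The type of a tuple: the number of distinct nonzero values among its components. -/
def tupleType {n : ℕ} (c : Fin n → ℕ) : ℕ :=
  ((Finset.univ.image c).filter (fun x => x ≠ 0)).card


private lemma count_lt_range (m t : ℕ) :
    ∑ k ∈ Finset.range m, (if k < t then 1 else 0) = min t m := by
  induction m with
  | zero => simp
  | succ m ih => rw [Finset.sum_range_succ, ih]; split <;> omega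

private lemma sum_Iic_fin {m : ℕ} (h : Fin m) (f : Fin m → ℕ) :
    ∑ i ∈ Finset.Iic h, f i = ∑ i : Fin m, if (i:ℕ) ≤ (h:ℕ) then f i else 0 := by
  rw [Finset.sum_ite, Finset.sum_const_zero, add_zero]
  congr 1
  ext i
  simp only [Finset.mem_filter, Finset.mem_univ, true_and, Finset.mem_Iic, Fin.le_def]

private lemma colSum_le {m n : ℕ} (A : Matrix (Fin m) (Fin n) ℕ) (hA : ZeroOne A)
    (j : Fin n) : colSum A j ≤ m := by
  calc colSum A j ≤ ∑ _i : Fin m, 1 := Finset.sum_le_sum fun i _ => hA i j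
  _ = m := by simp

/-- The 'only if' direction of Gale–Ryser: a monotone (0,1)-matrix's row sums
are majorized by the conjugate of its column sums. -/
theorem gale_ryser_only_if (m n : ℕ) (A : Matrix (Fin m) (Fin n) ℕ)
    (hA : ZeroOne A) (hmono : MonotoneMat A) :
    MajorizedBy (rowSum A) (conjTuple m (colSum A)) := by
  classical
  have hconj : ∀ i : Fin m, conjTuple m (colSum A) i =
      ∑ j, if (i:ℕ) + 1 ≤ colSum A j then 1 else 0 := fun i => by
    rw [conjTuple, Finset.card_filter]
  constructor
  · intro h
    have hL : ∑ i ∈ Finset.Iic h, rowSum A i = ∑ j, ∑ i ∈ Finset.Iic h, A i j := by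
      simp only [rowSum]; exact Finset.sum_comm
    have hR : ∑ i ∈ Finset.Iic h, conjTuple m (colSum A) i
        = ∑ j, min (colSum A j) ((h:ℕ) + 1) := by
      simp only [hconj]
      rw [Finset.sum_comm]
      refine Finset.sum_congr rfl fun j _ => ?_
      have e1 : (∑ i : Fin m, if (i:ℕ) ≤ (h:ℕ) then
            (if (i:ℕ) + 1 ≤ colSum A j then 1 else 0) else 0)
          = ∑ k ∈ Finset.range m, if k ≤ (h:ℕ) then
            (if k + 1 ≤ colSum A j then 1 else 0) else 0 :=
        Fin.sum_univ_eq_sum_range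
          (fun k => if k ≤ (h:ℕ) then (if k + 1 ≤ colSum A j then 1 else 0) else 0) m
      rw [sum_Iic_fin, e1]
      have : ∀ k ∈ Finset.range m,
          (if k ≤ (h:ℕ) then (if k + 1 ≤ colSum A j then 1 else 0) else 0)
          = if k < min (colSum A j) ((h:ℕ)+1) then 1 else 0 := by
        intro k _; split_ifs <;> omega
      rw [Finset.sum_congr rfl this, count_lt_range]
      have h1 : (h:ℕ) + 1 ≤ m := h.isLt
      have h2 : colSum A j ≤ m := colSum_le A hA j
      omega
    rw [hL, hR]
    refine Finset.sum_le_sum fun j _ => ?_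
    refine le_min ?_ ?_
    · exact Finset.sum_le_sum_of_subset (Finset.subset_univ _)
    · calc ∑ i ∈ Finset.Iic h, A i j ≤ ∑ _i ∈ Finset.Iic h, 1 :=
        Finset.sum_le_sum fun i _ => hA i j
      _ = (h:ℕ) + 1 := by simp [Fin.card_Iic]
  · have hL : ∑ i, rowSum A i = ∑ j, colSum A j := by
      simp only [rowSum, colSum]; exact Finset.sum_comm
    have hR : ∑ i, conjTuple m (colSum A) i = ∑ j, colSum A j := by
      simp only [hconj]
      rw [Finset.sum_comm]
      refine Finset.sum_congr rfl fun j _ => ?_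
      have e1 : (∑ i : Fin m, if (i:ℕ) + 1 ≤ colSum A j then 1 else 0)
          = ∑ k ∈ Finset.range m, if k + 1 ≤ colSum A j then 1 else 0 :=
        Fin.sum_univ_eq_sum_range (fun k => if k + 1 ≤ colSum A j then 1 else 0) m
      rw [e1]
      have : ∀ k ∈ Finset.range m,
          (if k + 1 ≤ colSum A j then 1 else 0) = if k < colSum A j then 1 else 0 := by
        intro k _; split_ifs <;> omega
      rw [Finset.sum_congr rfl this, count_lt_range]
      exact min_eq_left (colSum_le A hA j)
    rw [hL, hR]
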